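/- Let k ≥ 2 and k < m ≤ 2k − 1, and let E be the ℕ-labelled directed graph that is a loop (f₁,…,f_m) on m pairwise distinct vertices, with strictly positive labels l(f₁),…,l(f_m) and with l(f₁) = min{l(fᵢ) : 1 ≤ i ≤ m}. Let E' be the ℕ-labelled loop of length m − 1 obtained from E by deleting the edge f₁ and replacing the label of f₂ by l(f₁) + l(f₂). Then E' has the same weight as E, E' has no loops of length strictly less than k, and ct^k_ℕ(E') > ct^k_ℕ(E). -/
import Mathlib
set_option maxHeartbeats 1600000


/-- An `R`-labelled directed graph: vertices, edges, source/target maps and a label map. -/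
structure LGraph (R : Type) where
  V : Type
  E : Type
  s : E → V
  t : E → V
  l : E → R

namespace LGraph

variable {R : Type}

/-- `p = (e₁, …, e_k)` is a path of length `k`: `t eᵢ = s eᵢ₊₁` for `1 ≤ i < k`. -/
def IsPath (G : LGraph R) {k : ℕ} (p : Fin k → G.E) : Prop :=
  ∀ (i : ℕ) (hi : i + 1 < k), G.t (p ⟨i, by omega⟩) = G.s (p ⟨i + 1, hi⟩)

/-- A loop is a (nonempty) path whose source equals its target. -/
def IsLoop (G : LGraph R) {k : ℕ} (p : Fin k → G.E) : Prop :=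
  G.IsPath p ∧ ∃ hk : 0 < k, G.s (p ⟨0, hk⟩) = G.t (p ⟨k - 1, by omega⟩)

/-- No repeated edges: edges are determined by their source and target. -/
def NoRepeats (G : LGraph R) : Prop :=
  ∀ e f : G.E, G.s e = G.s f → G.t e = G.t f → e = f

/-- The weight of a labelled graph: the sum of all labels. -/
noncomputable def wt [CommSemiring R] (G : LGraph R) : R :=
  ∑ᶠ e : G.E, G.l e

/-- The `k`-content of a labelled graph: the sum, over all paths `p` of length `k`,
of the product of the labels of the edges of `p`. -/
noncomputable def ct [CommSemiring R] (G : LGraph R) (k : ℕ) : R :=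
  ∑ᶠ p : {p : Fin k → G.E // G.IsPath p}, ∏ i, G.l (p.1 i)

/-- The Chirvasitu property for `k`-paths: every two edges belong to a common
path of length `k`. -/
def Chirvasitu (G : LGraph R) (k : ℕ) : Prop :=
  ∀ e f : G.E, ∃ p : Fin k → G.E, G.IsPath p ∧ (∃ i, p i = e) ∧ (∃ i, p i = f)

end LGraph


open Finset in
private lemma sum_split (f : ℕ → ℕ) (u v w : ℕ) :
    ∑ a ∈ range (u + v + w), f a
      = ((∑ a ∈ range u, f a) + ∑ t ∈ range v, f (u + t)) + ∑ t ∈ range w, f (u + v + t) := by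
  rw [Finset.sum_range_add, Finset.sum_range_add]

open Finset in
private lemma shrink_key (k m : ℕ) (hk : 2 ≤ k) (hm1 : k < m)
    (LL MM : ℕ → ℕ)
    (hLpos : ∀ i, 0 < LL i)
    (hLper : ∀ i, LL (i + m) = LL i)
    (hMper : ∀ i, MM (i + (m - 1)) = MM i)
    (hmin : ∀ i, LL 0 ≤ LL i)
    (hM0 : MM 0 = LL 0 + LL 1)
    (hM : ∀ i, 1 ≤ i → i ≤ m - 2 → MM i = LL (i + 1)) :
    ∑ a ∈ range m, ∏ i ∈ range k, LL (a + i)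
      < ∑ a ∈ range (m - 1), ∏ i ∈ range k, MM (a + i) := by
  obtain ⟨k', rfl⟩ : ∃ k', k = k' + 1 := ⟨k - 1, by omega⟩
  have hk' : 1 ≤ k' := by omega
  set P : ℕ → ℕ := fun a => ∏ i ∈ range (k' + 1), LL (a + i) with hPdef
  set Q : ℕ → ℕ := fun a => ∏ i ∈ range (k' + 1), MM (a + i) with hQdef
  set A : ℕ → ℕ := fun j => (∏ i ∈ range j, LL (m - j + i)) * ∏ i ∈ range (k' - j), LL (2 + i)
    with hAdef
  have hApos : ∀ j, 0 < A j := by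
    intro j
    simp only [hAdef]
    exact Nat.mul_pos (Finset.prod_pos fun _ _ => hLpos _) (Finset.prod_pos fun _ _ => hLpos _)
  -- F1 : canonical form of special L-windows
  have F1 : ∀ j, j ≤ k' → P (m - j)
      = LL 0 * ((∏ i ∈ range j, LL (m - j + i)) * ∏ i ∈ range (k' - j), LL (1 + i)) := by
    intro j hj
    obtain ⟨d, hd⟩ : ∃ d, k' + 1 = (j + 1) + d := ⟨k' - j, by omega⟩
    have hd' : k' - j = d := by omega
    simp only [hPdef, hd']
    rw [hd, Finset.prod_range_add, Finset.prod_range_succ]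
    have e1 : m - j + j = 0 + m := by omega
    rw [e1, hLper]
    have e2 : ∏ i ∈ range d, LL (m - j + (j + 1 + i)) = ∏ i ∈ range d, LL (1 + i) :=
      Finset.prod_congr rfl fun i _ => by
        have e : m - j + (j + 1 + i) = (1 + i) + m := by omega
        rw [e, hLper]
    rw [e2]; ring
  -- F3 : canonical form of special M-windows
  have F3 : ∀ j, j ≤ k' → Q (m - 1 - j) = (LL 0 + LL 1) * A j := by
    intro j hj
    obtain ⟨d, hd⟩ : ∃ d, k' + 1 = (j + 1) + d := ⟨k' - j, by omega⟩
    have hd' : k' - j = d := by omega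
    simp only [hQdef, hAdef, hd']
    rw [hd, Finset.prod_range_add, Finset.prod_range_succ]
    have e1 : m - 1 - j + j = 0 + (m - 1) := by omega
    rw [e1, hMper, hM0]
    have e2 : ∏ i ∈ range j, MM (m - 1 - j + i) = ∏ i ∈ range j, LL (m - j + i) :=
      Finset.prod_congr rfl fun i hi => by
        rw [Finset.mem_range] at hi
        rw [hM (m - 1 - j + i) (by omega) (by omega)]
        congr 1; omega
    have e3 : ∏ i ∈ range d, MM (m - 1 - j + (j + 1 + i)) = ∏ i ∈ range d, LL (2 + i) :=
      Finset.prod_congr rfl fun i hi => by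
        rw [Finset.mem_range] at hi
        have e4 : m - 1 - j + (j + 1 + i) = (1 + i) + (m - 1) := by omega
        rw [e4, hMper, hM (1 + i) (by omega) (by omega)]
        congr 1; omega
    rw [e2, e3]; ring
  -- key termwise bound
  have Fkey : ∀ j, j < k' → P (m - j) ≤ LL 1 * A (j + 1) := by
    intro j hj
    rw [F1 j (by omega)]
    simp only [hAdef]
    have eT : ∏ i ∈ range (j + 1), LL (m - (j + 1) + i)
        = (∏ i ∈ range j, LL (m - j + i)) * LL (m - (j + 1)) := by
      rw [Finset.prod_range_succ', Nat.add_zero]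
      exact congrArg (fun x => x * LL (m - (j + 1)))
        (Finset.prod_congr rfl fun i _ => by congr 1; omega)
    have eH : ∏ i ∈ range (k' - j), LL (1 + i)
        = LL 1 * ∏ i ∈ range (k' - (j + 1)), LL (2 + i) := by
      rw [show k' - j = (k' - (j + 1)) + 1 by omega, Finset.prod_range_succ', Nat.add_zero,
        mul_comm]
      exact congrArg (fun x => LL 1 * x)
        (Finset.prod_congr rfl fun i _ => by congr 1; omega)
    rw [eH, eT]
    calc LL 0 * ((∏ i ∈ range j, LL (m - j + i)) * (LL 1 * ∏ i ∈ range (k' - (j + 1)), LL (2 + i)))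
        = (LL 1 * ((∏ i ∈ range j, LL (m - j + i)) * ∏ i ∈ range (k' - (j + 1)), LL (2 + i)))
            * LL 0 := by ring
      _ ≤ (LL 1 * ((∏ i ∈ range j, LL (m - j + i)) * ∏ i ∈ range (k' - (j + 1)), LL (2 + i)))
            * LL (m - (j + 1)) := Nat.mul_le_mul (le_refl _) (hmin _)
      _ = LL 1 * ((∏ i ∈ range j, LL (m - j + i)) * LL (m - (j + 1))
            * ∏ i ∈ range (k' - (j + 1)), LL (2 + i)) := by ring
  -- F2 : the window starting at 1
  have F2 : P 1 = LL 1 * A 0 := by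
    simp only [hPdef, hAdef, Finset.prod_range_zero, Nat.sub_zero, one_mul]
    rw [Finset.prod_range_succ', Nat.add_zero, mul_comm]
    exact congrArg (fun x => LL 1 * x)
      (Finset.prod_congr rfl fun i _ => by congr 1; omega)
  -- sum splits
  have hsplitL := sum_split P 2 (m - k' - 2) k'
  rw [show 2 + (m - k' - 2) + k' = m by omega] at hsplitL
  have hsplitR := sum_split Q 1 (m - k' - 2) k'
  rw [show 1 + (m - k' - 2) + k' = m - 1 by omega] at hsplitR
  -- middle windows match
  have hmid : ∑ t ∈ range (m - k' - 2), Q (1 + t) = ∑ t ∈ range (m - k' - 2), P (2 + t) := by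
    refine Finset.sum_congr rfl fun t ht => ?_
    rw [Finset.mem_range] at ht
    simp only [hPdef, hQdef]
    refine Finset.prod_congr rfl fun i hi => ?_
    rw [Finset.mem_range] at hi
    rw [hM (1 + t + i) (by omega) (by omega)]
    congr 1; omega
  -- reflect the special blocks
  have hreflL : ∑ t ∈ range k', P (2 + (m - k' - 2) + t) = ∑ j ∈ range k', P (m - (j + 1)) := by
    rw [← Finset.sum_range_reflect (fun j => P (m - (j + 1))) k']
    refine Finset.sum_congr rfl fun t ht => ?_
    rw [Finset.mem_range] at ht
    congr 1; omega
  have hreflR : ∑ t ∈ range k', Q (1 + (m - k' - 2) + t)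
      = ∑ j ∈ range k', Q (m - 1 - (j + 1)) := by
    rw [← Finset.sum_range_reflect (fun j => Q (m - 1 - (j + 1))) k']
    refine Finset.sum_congr rfl fun t ht => ?_
    rw [Finset.mem_range] at ht
    congr 1; omega
  -- close up the special sums
  have hP0 : P (m - 0) = P 0 := by
    simp only [Nat.sub_zero, hPdef]
    exact Finset.prod_congr rfl fun i _ => by rw [Nat.add_comm m i, hLper i, Nat.zero_add]
  have hQ0 : Q (m - 1 - 0) = Q 0 := by
    simp only [Nat.sub_zero, hQdef]
    exact Finset.prod_congr rfl fun i _ => by rw [Nat.add_comm (m - 1) i, hMper i, Nat.zero_add]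
  have hsumL : P 0 + ∑ j ∈ range k', P (m - (j + 1)) = ∑ j ∈ range (k' + 1), P (m - j) := by
    rw [Finset.sum_range_succ' (fun j => P (m - j)) k', hP0]
    ring
  have hsumR : Q 0 + ∑ j ∈ range k', Q (m - 1 - (j + 1))
      = ∑ j ∈ range (k' + 1), Q (m - 1 - j) := by
    rw [Finset.sum_range_succ' (fun j => Q (m - 1 - j)) k', hQ0]
    ring
  -- the main inequality on special blocks
  have main : P 1 + ∑ j ∈ range (k' + 1), P (m - j) < ∑ j ∈ range (k' + 1), Q (m - 1 - j) := by
    have hQsum : ∑ j ∈ range (k' + 1), Q (m - 1 - j)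
        = ∑ j ∈ range (k' + 1), LL 0 * A j + ∑ j ∈ range (k' + 1), LL 1 * A j := by
      rw [← Finset.sum_add_distrib]
      refine Finset.sum_congr rfl fun j hj => ?_
      rw [Finset.mem_range] at hj
      rw [F3 j (by omega)]; ring
    have hPsum : ∑ j ∈ range (k' + 1), P (m - j)
        = ∑ j ∈ range k', P (m - j) + P (m - k') := Finset.sum_range_succ _ _
    have hPlast : P (m - k') = LL 0 * A k' := by
      rw [F1 k' (le_refl k')]
      simp only [hAdef, Nat.sub_self, Finset.prod_range_zero, mul_one]
    have hstep : ∑ j ∈ range k', P (m - j) ≤ ∑ j ∈ range k', LL 1 * A (j + 1) :=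
      Finset.sum_le_sum fun j hj => Fkey j (Finset.mem_range.mp hj)
    have hLL1 : LL 1 * A 0 + ∑ j ∈ range k', LL 1 * A (j + 1)
        = ∑ j ∈ range (k' + 1), LL 1 * A j := by
      rw [Finset.sum_range_succ' (fun j => LL 1 * A j) k']
      ring
    have hLL0 : ∑ j ∈ range (k' + 1), LL 0 * A j
        = ∑ j ∈ range k', LL 0 * A j + LL 0 * A k' := Finset.sum_range_succ _ _
    have hpos : 0 < ∑ j ∈ range k', LL 0 * A j := by
      refine Finset.sum_pos (fun j _ => Nat.mul_pos (hLpos 0) (hApos j)) ⟨0, ?_⟩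
      exact Finset.mem_range.mpr (by omega)
    calc P 1 + ∑ j ∈ range (k' + 1), P (m - j)
        = LL 1 * A 0 + (∑ j ∈ range k', P (m - j) + LL 0 * A k') := by
          rw [F2, hPsum, hPlast]
      _ ≤ LL 1 * A 0 + (∑ j ∈ range k', LL 1 * A (j + 1) + LL 0 * A k') := by
          exact Nat.add_le_add_left (Nat.add_le_add_right hstep _) _
      _ < LL 1 * A 0 + (∑ j ∈ range k', LL 1 * A (j + 1) + LL 0 * A k')
            + ∑ j ∈ range k', LL 0 * A j := Nat.lt_add_of_pos_right hpos
      _ = (∑ j ∈ range (k' + 1), LL 1 * A j) + (∑ j ∈ range k', LL 0 * A j + LL 0 * A k') := by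
          rw [← hLL1]; ring
      _ = ∑ j ∈ range (k' + 1), Q (m - 1 - j) := by rw [hQsum, ← hLL0]; ring
  rw [hsplitL, hsplitR, hmid, hreflL, hreflR]
  have h2 : ∑ a ∈ range 2, P a = P 0 + P 1 := by
    rw [Finset.sum_range_succ, Finset.sum_range_one]
  have h1 : ∑ a ∈ range 1, Q a = Q 0 := Finset.sum_range_one _
  rw [h2, h1]
  linarith [main, hsumL, hsumR]

private lemma cyc_path_val {n kk : ℕ} (p : Fin kk → Fin n)
    (hp : ∀ (i : ℕ) (hi : i + 1 < kk),
      (((p ⟨i, by omega⟩ : Fin n) : ℕ) + 1) % n = ((p ⟨i + 1, hi⟩ : Fin n) : ℕ))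
    (h0 : 0 < kk) :
    ∀ (i : ℕ) (hi : i < kk), ((p ⟨i, hi⟩ : Fin n) : ℕ) = (((p ⟨0, h0⟩ : Fin n) : ℕ) + i) % n := by
  intro i
  induction i with
  | zero =>
    intro hi
    rw [Nat.add_zero, Nat.mod_eq_of_lt (p ⟨0, h0⟩).isLt]
  | succ i ih =>
    intro hi
    rw [← hp i hi, ih (by omega), Nat.mod_add_mod, Nat.add_assoc]

private lemma cyc_ct (n kk : ℕ) (hn : 0 < n) (hkk : 0 < kk) (Lab : Fin n → ℕ) :
    LGraph.ct (⟨Fin n, Fin n, id,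
        fun i => ⟨((i : ℕ) + 1) % n, Nat.mod_lt _ hn⟩, Lab⟩ : LGraph ℕ) kk
      = ∑ a ∈ Finset.range n, ∏ i ∈ Finset.range kk, Lab ⟨(a + i) % n, Nat.mod_lt _ hn⟩ := by
  set G : LGraph ℕ :=
    ⟨Fin n, Fin n, id, fun i => ⟨((i : ℕ) + 1) % n, Nat.mod_lt _ hn⟩, Lab⟩ with hG
  have hpath : ∀ a : Fin n,
      G.IsPath (fun i : Fin kk => (⟨((a : ℕ) + (i : ℕ)) % n, Nat.mod_lt _ hn⟩ : Fin n)) := by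
    intro a i hi
    apply Fin.ext
    show ((((a : ℕ) + i) % n) + 1) % n = ((a : ℕ) + (i + 1)) % n
    rw [Nat.mod_add_mod, Nat.add_assoc]
  let e : Fin n → {p : Fin kk → G.E // G.IsPath p} := fun a =>
    ⟨fun i => (⟨((a : ℕ) + (i : ℕ)) % n, Nat.mod_lt _ hn⟩ : Fin n), hpath a⟩
  have hbij : Function.Bijective e := by
    constructor
    · intro a b hab
      have h := congrArg (fun q => ((q.1 ⟨0, hkk⟩ : Fin n) : ℕ)) hab
      simp only [e] at h
      apply Fin.ext
      simpa [Nat.mod_eq_of_lt a.isLt, Nat.mod_eq_of_lt b.isLt] using h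
    · rintro ⟨p, hp⟩
      refine ⟨p ⟨0, hkk⟩, Subtype.ext (funext fun i => Fin.ext ?_)⟩
      exact (cyc_path_val p (fun j hj => congrArg Fin.val (hp j hj)) hkk i i.isLt).symm
  have h1 : LGraph.ct G kk = ∑ᶠ a : Fin n, ∏ i : Fin kk, G.l ((e a).1 i) :=
    (finsum_eq_of_bijective e hbij (fun a => rfl)).symm
  rw [h1, finsum_eq_sum_of_fintype]
  rw [← Fin.sum_univ_eq_sum_range
    (fun a => ∏ i ∈ Finset.range kk, Lab ⟨(a + i) % n, Nat.mod_lt _ hn⟩) n]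
  exact Finset.sum_congr rfl fun a _ =>
    Fin.prod_univ_eq_prod_range (fun i => Lab ⟨((a : ℕ) + i) % n, Nat.mod_lt _ hn⟩) kk

private lemma cyc_wt (n : ℕ) (hn : 0 < n) (t : Fin n → Fin n) (Lab : Fin n → ℕ) :
    LGraph.wt (⟨Fin n, Fin n, id, t, Lab⟩ : LGraph ℕ)
      = ∑ a ∈ Finset.range n, Lab ⟨a % n, Nat.mod_lt _ hn⟩ := by
  have h1 : LGraph.wt (⟨Fin n, Fin n, id, t, Lab⟩ : LGraph ℕ) = ∑ a : Fin n, Lab a :=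
    finsum_eq_sum_of_fintype _
  rw [h1, ← Fin.sum_univ_eq_sum_range (fun a => Lab ⟨a % n, Nat.mod_lt _ hn⟩) n]
  exact Finset.sum_congr rfl fun a _ => by
    congr 1
    exact Fin.ext (Nat.mod_eq_of_lt a.isLt).symm

open Finset in
private lemma wt_key (m : ℕ) (hm : 2 ≤ m) (LL MM : ℕ → ℕ)
    (hM0 : MM 0 = LL 0 + LL 1) (hM : ∀ i, 1 ≤ i → i ≤ m - 2 → MM i = LL (i + 1)) :
    ∑ a ∈ Finset.range (m - 1), MM a = ∑ a ∈ Finset.range m, LL a := by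
  have s1 := sum_split LL 2 (m - 2) 0
  rw [show 2 + (m - 2) + 0 = m by omega] at s1
  have s2 := sum_split MM 1 (m - 2) 0
  rw [show 1 + (m - 2) + 0 = m - 1 by omega] at s2
  rw [s1, s2]
  have hmm : ∑ t ∈ Finset.range (m - 2), MM (1 + t) = ∑ t ∈ Finset.range (m - 2), LL (2 + t) :=
    Finset.sum_congr rfl fun t ht => by
      rw [Finset.mem_range] at ht
      rw [hM (1 + t) (by omega) (by omega)]
      congr 1
      omega
  have h2 : ∑ a ∈ Finset.range 2, LL a = LL 0 + LL 1 := by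
    rw [Finset.sum_range_succ, Finset.sum_range_one]
  have h1 : ∑ a ∈ Finset.range 1, MM a = MM 0 := Finset.sum_range_one _
  rw [hmm, h1, h2, hM0]
  simp

/-- Shrinking an `ℕ`-labelled loop of length `m`, `k < m ≤ 2k - 1`
(`k ≥ 2`), on `m` pairwise distinct vertices — by deleting an edge `f₁` of minimal label
and adding its label to that of the following edge `f₂` — preserves the weight, creates no
loops of length `< k`, and strictly increases the `k`-content. -/
theorem shrink_loop_increases_ct (k m : ℕ) (hk : 2 ≤ k) (hm1 : k < m) (hm2 : m ≤ 2 * k - 1)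
    (L : Fin m → ℕ) (hL : ∀ i, 0 < L i) (hmin : ∀ i, L ⟨0, by omega⟩ ≤ L i) :
    (let G : LGraph ℕ :=
      ⟨Fin m, Fin m, id,
       fun i => ⟨((i : ℕ) + 1) % m, Nat.mod_lt _ (by omega)⟩, L⟩
     let G' : LGraph ℕ :=
      ⟨Fin (m - 1), Fin (m - 1), id,
       fun i => ⟨((i : ℕ) + 1) % (m - 1), Nat.mod_lt _ (by omega)⟩,
       fun i => if (i : ℕ) = 0 then L ⟨0, by omega⟩ + L ⟨1, by omega⟩
                else L ⟨(i : ℕ) + 1, by have := i.isLt; omega⟩⟩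
     G'.wt = G.wt ∧
     (∀ (j : ℕ) (q : Fin j → G'.E), j < k → ¬ G'.IsLoop q) ∧
     G.ct k < G'.ct k) := by
  have hm0 : 0 < m := by omega
  have hn0 : 0 < m - 1 := by omega
  have hk0 : 0 < k := by omega
  set tG : Fin m → Fin m := fun i => ⟨((i : ℕ) + 1) % m, Nat.mod_lt _ hm0⟩ with htG
  set tG' : Fin (m - 1) → Fin (m - 1) :=
    fun i => ⟨((i : ℕ) + 1) % (m - 1), Nat.mod_lt _ hn0⟩ with htG'
  set Lab' : Fin (m - 1) → ℕ := fun i =>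
    if (i : ℕ) = 0 then L ⟨0, hm0⟩ + L ⟨1, by omega⟩
    else L ⟨(i : ℕ) + 1, by have := i.isLt; omega⟩ with hLab'
  set LL : ℕ → ℕ := fun a => L ⟨a % m, Nat.mod_lt _ hm0⟩ with hLL
  set MM : ℕ → ℕ := fun a => Lab' ⟨a % (m - 1), Nat.mod_lt _ hn0⟩ with hMM
  have heval : ∀ (x : ℕ) (h : x < m - 1), Lab' ⟨x, h⟩ =
      if x = 0 then L ⟨0, hm0⟩ + L ⟨1, by omega⟩ else L ⟨x + 1, by omega⟩ := fun x h => rfl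
  have hLpos' : ∀ i, 0 < LL i := fun i => hL _
  have hLper' : ∀ i, LL (i + m) = LL i := fun i =>
    congrArg L (Fin.ext (Nat.add_mod_right i m))
  have hMper' : ∀ i, MM (i + (m - 1)) = MM i := fun i =>
    congrArg Lab' (Fin.ext (Nat.add_mod_right i (m - 1)))
  have hLL0 : LL 0 = L ⟨0, hm0⟩ := congrArg L (Fin.ext (Nat.zero_mod m))
  have hLL1 : LL 1 = L ⟨1, by omega⟩ := congrArg L (Fin.ext (Nat.mod_eq_of_lt (by omega)))
  have hmin' : ∀ i, LL 0 ≤ LL i := by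
    intro i
    rw [hLL0]
    exact hmin _
  have hM0' : MM 0 = LL 0 + LL 1 := by
    have e0 : MM 0 = Lab' ⟨0, hn0⟩ := congrArg Lab' (Fin.ext (Nat.zero_mod (m - 1)))
    rw [e0, heval 0 hn0, if_pos rfl, hLL0, hLL1]
  have hM' : ∀ i, 1 ≤ i → i ≤ m - 2 → MM i = LL (i + 1) := by
    intro i h1 h2
    have e0 : MM i = Lab' ⟨i, by omega⟩ :=
      congrArg Lab' (Fin.ext (Nat.mod_eq_of_lt (by omega)))
    rw [e0, heval i (by omega), if_neg (by omega)]
    exact (congrArg L (Fin.ext (Nat.mod_eq_of_lt (by omega)))).symm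
  refine ⟨?_, ?_, ?_⟩
  · -- weight is preserved
    show LGraph.wt (⟨Fin (m - 1), Fin (m - 1), id, tG', Lab'⟩ : LGraph ℕ)
        = LGraph.wt (⟨Fin m, Fin m, id, tG, L⟩ : LGraph ℕ)
    rw [cyc_wt (m - 1) hn0 tG' Lab', cyc_wt m hm0 tG L]
    exact wt_key m (by omega) LL MM hM0' hM'
  · -- no short loops
    intro j q hj
    rintro ⟨hpath, h0, hloop⟩
    have hv := cyc_path_val (n := m - 1) q
      (fun i hi => congrArg Fin.val (hpath i hi)) h0 (j - 1) (by omega)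
    have hlv : ((q ⟨0, h0⟩ : Fin (m - 1)) : ℕ)
        = (((q ⟨j - 1, by omega⟩ : Fin (m - 1)) : ℕ) + 1) % (m - 1) :=
      congrArg Fin.val hloop
    set x : ℕ := ((q ⟨0, h0⟩ : Fin (m - 1)) : ℕ) with hx
    have hxlt : x < m - 1 := (q ⟨0, h0⟩ : Fin (m - 1)).isLt
    have e3 : (((q ⟨j - 1, by omega⟩ : Fin (m - 1)) : ℕ) + 1) % (m - 1)
        = (x + j) % (m - 1) := by
      rw [hv, Nat.mod_add_mod]
      congr 1
      omega
    have e2 : x = (x + j) % (m - 1) := hlv.trans e3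
    rcases Nat.lt_or_ge (x + j) (m - 1) with h | h
    · rw [Nat.mod_eq_of_lt h] at e2
      omega
    · rw [Nat.mod_eq_sub_mod h, Nat.mod_eq_of_lt (by omega)] at e2
      omega
  · -- content strictly increases
    show LGraph.ct (⟨Fin m, Fin m, id, tG, L⟩ : LGraph ℕ) k
        < LGraph.ct (⟨Fin (m - 1), Fin (m - 1), id, tG', Lab'⟩ : LGraph ℕ) k
    rw [cyc_ct m k hm0 hk0 L, cyc_ct (m - 1) k hn0 hk0 Lab']
    exact shrink_key k m hk hm1 LL MM hLpos' hLper' hMper' hmin' hM0' hM'
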